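/- arXiv:math/0212139 — 2 statements merged into one kernel-verified Lean document; each statement's English description precedes it below -/
import Mathlib

section
/- Let m ≥ 2 and let D be an SDP design of order m on point set X. If B₁, B₂, B₃, B₄ are four distinct blocks with B₁ Δ B₂ Δ B₃ Δ B₄ = X (the whole point set), then each of the four triple intersections |B₁∩B₂∩B₃|, |B₁∩B₂∩B₄|, |B₁∩B₃∩B₄|, |B₂∩B₃∩B₄| equals 2^(2m−3) − 2^(m−2), and B₁ ∩ B₂ ∩ B₃ ∩ B₄ = ∅. -/
open Finset
open scoped symmDiff

/-- A square 2-(v,k,λ) design on the point type `α`: the block family `ℬ` consists of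
`v` distinct `k`-subsets, every pair of distinct points lies in exactly `lam` blocks,
and (as is automatic for square designs) any two distinct blocks meet in `lam` points. -/
def IsSquareDesign {α : Type*} [Fintype α] [DecidableEq α]
    (v k lam : ℕ) (ℬ : Finset (Finset α)) : Prop :=
  Fintype.card α = v ∧ ℬ.card = v ∧ (∀ B ∈ ℬ, B.card = k) ∧
  (∀ p q : α, p ≠ q → (ℬ.filter fun B => p ∈ B ∧ q ∈ B).card = lam) ∧
  (∀ B₁ ∈ ℬ, ∀ B₂ ∈ ℬ, B₁ ≠ B₂ → (B₁ ∩ B₂).card = lam)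

/-- An SDP design of order `m`: a square 2-(2^(2m), 2^(2m-1)-2^(m-1), 2^(2m-2)-2^(m-1))
design in which the symmetric difference of any three distinct blocks is a block or the
complement of a block. -/
def IsSDPDesign {α : Type*} [Fintype α] [DecidableEq α]
    (m : ℕ) (ℬ : Finset (Finset α)) : Prop :=
  IsSquareDesign (2^(2*m)) (2^(2*m-1) - 2^(m-1)) (2^(2*m-2) - 2^(m-1)) ℬ ∧
  ∀ B₁ ∈ ℬ, ∀ B₂ ∈ ℬ, ∀ B₃ ∈ ℬ, B₁ ≠ B₂ → B₁ ≠ B₃ → B₂ ≠ B₃ →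
    B₁ ∆ B₂ ∆ B₃ ∈ ℬ ∨ (B₁ ∆ B₂ ∆ B₃)ᶜ ∈ ℬ

lemma card_symmDiff_aux {α : Type*} [DecidableEq α] (s t : Finset α) :
    (s ∆ t).card + 2 * (s ∩ t).card = s.card + t.card := by
  have h1 : s ∆ t = (s ∪ t) \ (s ∩ t) := symmDiff_eq_sup_sdiff_inf s t
  have h3 : (s ∩ t) ⊆ (s ∪ t) := (Finset.inter_subset_left).trans Finset.subset_union_left
  have h2 := Finset.card_union_add_card_inter s t
  have h4 := Finset.card_le_card h3
  rw [h1, Finset.card_sdiff_of_subset h3]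
  omega

lemma sdp_triple_aux {α : Type*} [Fintype α] [DecidableEq α] (A B C D : Finset α)
    (h : A ∆ B ∆ C ∆ D = Finset.univ) :
    4 * (A ∩ B ∩ C).card + A.card + B.card + C.card + D.card =
      Fintype.card α + 2 * ((A ∩ B).card + (A ∩ C).card + (B ∩ C).card) := by
  have e1 := card_symmDiff_aux A B
  have e2 := card_symmDiff_aux (A ∆ B) C
  have e3 := card_symmDiff_aux (A ∩ C) (B ∩ C)
  have hp : (A ∆ B) ∩ C = (A ∩ C) ∆ (B ∩ C) := by
    ext x; simp [Finset.mem_symmDiff]; tauto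
  have hq : (A ∩ C) ∩ (B ∩ C) = A ∩ B ∩ C := by
    ext x; simp
  rw [hp] at e2
  rw [hq] at e3
  have hdc : A ∆ B ∆ C = Dᶜ := by
    have h5 : A ∆ B ∆ C = (A ∆ B ∆ C ∆ D) ∆ D := (symmDiff_symmDiff_cancel_right _ _).symm
    rw [h5, h]
    ext x; simp [Finset.mem_symmDiff]
  have e4 := Finset.card_add_card_compl D
  rw [hdc] at e2
  omega

theorem sdp_four_blocks_symmDiff_univ {m : ℕ} (hm : 2 ≤ m)
    {α : Type*} [Fintype α] [DecidableEq α] {ℬ : Finset (Finset α)}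
    (hD : IsSDPDesign m ℬ)
    {B₁ B₂ B₃ B₄ : Finset α} (h₁ : B₁ ∈ ℬ) (h₂ : B₂ ∈ ℬ) (h₃ : B₃ ∈ ℬ) (h₄ : B₄ ∈ ℬ)
    (h₁₂ : B₁ ≠ B₂) (h₁₃ : B₁ ≠ B₃) (h₁₄ : B₁ ≠ B₄)
    (h₂₃ : B₂ ≠ B₃) (h₂₄ : B₂ ≠ B₄) (h₃₄ : B₃ ≠ B₄)
    (hw : B₁ ∆ B₂ ∆ B₃ ∆ B₄ = Finset.univ) :
    (B₁ ∩ B₂ ∩ B₃).card = 2^(2*m-3) - 2^(m-2) ∧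
    (B₁ ∩ B₂ ∩ B₄).card = 2^(2*m-3) - 2^(m-2) ∧
    (B₁ ∩ B₃ ∩ B₄).card = 2^(2*m-3) - 2^(m-2) ∧
    (B₂ ∩ B₃ ∩ B₄).card = 2^(2*m-3) - 2^(m-2) ∧
    B₁ ∩ B₂ ∩ B₃ ∩ B₄ = ∅ := by
  obtain ⟨⟨hv, _, hk, _, hlam⟩, _⟩ := hD
  -- power arithmetic
  have ha : (1:ℕ) ≤ 2^(m-2) := Nat.one_le_two_pow
  have hP16 : 2^(2*m) = 16 * (2^(m-2) * 2^(m-2)) := by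
    have : 2*m = (m-2) + ((m-2) + 4) := by omega
    rw [this, pow_add, pow_add]; ring
  have hP8 : 2^(2*m-1) = 8 * (2^(m-2) * 2^(m-2)) := by
    have : 2*m-1 = (m-2) + ((m-2) + 3) := by omega
    rw [this, pow_add, pow_add]; ring
  have hP4 : 2^(2*m-2) = 4 * (2^(m-2) * 2^(m-2)) := by
    have : 2*m-2 = (m-2) + ((m-2) + 2) := by omega
    rw [this, pow_add, pow_add]; ring
  have hP2 : 2^(2*m-3) = 2 * (2^(m-2) * 2^(m-2)) := by
    have : 2*m-3 = (m-2) + ((m-2) + 1) := by omega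
    rw [this, pow_add, pow_add]; ring
  have hP1 : 2^(m-1) = 2 * 2^(m-2) := by
    have : m-1 = (m-2) + 1 := by omega
    rw [this, pow_add]; ring
  have hle : 2^(m-2) ≤ 2^(m-2) * 2^(m-2) := Nat.le_mul_of_pos_left _ (by positivity)
  -- permuted symmdiff equalities
  have hw2 : B₁ ∆ B₂ ∆ B₄ ∆ B₃ = Finset.univ := by
    rw [symmDiff_right_comm]; exact hw
  have hw3 : B₁ ∆ B₃ ∆ B₄ ∆ B₂ = Finset.univ := by
    rw [symmDiff_right_comm, symmDiff_right_comm B₁ B₃ B₂]; exact hw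
  have hw4 : B₂ ∆ B₃ ∆ B₄ ∆ B₁ = Finset.univ := by
    rw [symmDiff_right_comm, symmDiff_right_comm B₂ B₃ B₁, symmDiff_comm B₂ B₁]; exact hw
  have e1 := sdp_triple_aux B₁ B₂ B₃ B₄ hw
  have e2 := sdp_triple_aux B₁ B₂ B₄ B₃ hw2
  have e3 := sdp_triple_aux B₁ B₃ B₄ B₂ hw3
  have e4 := sdp_triple_aux B₂ B₃ B₄ B₁ hw4
  rw [hv, hk B₁ h₁, hk B₂ h₂, hk B₃ h₃, hk B₄ h₄,
    hlam B₁ h₁ B₂ h₂ h₁₂, hlam B₁ h₁ B₃ h₃ h₁₃, hlam B₂ h₂ B₃ h₃ h₂₃] at e1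
  rw [hv, hk B₁ h₁, hk B₂ h₂, hk B₃ h₃, hk B₄ h₄,
    hlam B₁ h₁ B₂ h₂ h₁₂, hlam B₁ h₁ B₄ h₄ h₁₄, hlam B₂ h₂ B₄ h₄ h₂₄] at e2
  rw [hv, hk B₁ h₁, hk B₂ h₂, hk B₃ h₃, hk B₄ h₄,
    hlam B₁ h₁ B₃ h₃ h₁₃, hlam B₁ h₁ B₄ h₄ h₁₄, hlam B₃ h₃ B₄ h₄ h₃₄] at e3
  rw [hv, hk B₁ h₁, hk B₂ h₂, hk B₃ h₃, hk B₄ h₄,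
    hlam B₂ h₂ B₃ h₃ h₂₃, hlam B₂ h₂ B₄ h₄ h₂₄, hlam B₃ h₃ B₄ h₄ h₃₄] at e4
  rw [hP16, hP8, hP4, hP1] at e1 e2 e3 e4
  have hempty : B₁ ∩ B₂ ∩ B₃ ∩ B₄ = ∅ := by
    rw [Finset.eq_empty_iff_forall_notMem]
    intro x hx
    simp only [Finset.mem_inter] at hx
    have hxu : x ∈ B₁ ∆ B₂ ∆ B₃ ∆ B₄ := hw ▸ Finset.mem_univ x
    simp [Finset.mem_symmDiff] at hxu
    tauto
  refine ⟨?_, ?_, ?_, ?_, hempty⟩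
  · rw [hP2]
    generalize (2:ℕ)^(m-2) * 2^(m-2) = b at e1 hle ⊢
    omega
  · rw [hP2]
    generalize (2:ℕ)^(m-2) * 2^(m-2) = b at e2 hle ⊢
    omega
  · rw [hP2]
    generalize (2:ℕ)^(m-2) * 2^(m-2) = b at e3 hle ⊢
    omega
  · rw [hP2]
    generalize (2:ℕ)^(m-2) * 2^(m-2) = b at e4 hle ⊢
    omega
end

section
/- Let m ≥ 2 and consider the symplectic SDP design of order m in Block's description. Then for any four distinct points a, b, c, d ∈ X_m, the number of the four 3-element subsets of {B_a, B_b, B_c, B_d} whose triple intersection has cardinality 2^(2m−3) − 2^(m−1) is even; that is, the symplectic SDP design satisfies Condition 2. -/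
open Finset

def symplecticBlock (m : ℕ) (a : Fin m → Fin 4) : Finset (Fin m → Fin 4) :=
  Finset.univ.filter fun x => Odd (Finset.univ.filter (fun i => a i = x i)).card

def symplecticBlocks (m : ℕ) : Finset (Finset (Fin m → Fin 4)) :=
  Finset.univ.image (symplecticBlock m)

private def sgn {m : ℕ} (t x : Fin m → Fin 4) : ℤ := ∏ i, if t i = x i then -1 else 1

private def Dcnt {m : ℕ} (a b c : Fin m → Fin 4) : ℕ :=
  (Finset.univ.filter fun i => a i ≠ b i ∧ a i ≠ c i ∧ b i ≠ c i).card

private lemma sum_pi {m : ℕ} (f : Fin m → Fin 4 → ℤ) :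
    ∑ x : Fin m → Fin 4, ∏ i, f i (x i) = ∏ i, ∑ v : Fin 4, f i v := by
  rw [Finset.prod_univ_sum, ← Fintype.piFinset_univ]

private lemma sgn_eq_pow {m : ℕ} (t x : Fin m → Fin 4) :
    sgn t x = (-1 : ℤ) ^ (Finset.univ.filter fun i => t i = x i).card := by
  rw [sgn, ← Finset.prod_const, Finset.prod_filter]

private lemma sum_sgn_one {m : ℕ} (a : Fin m → Fin 4) :
    ∑ x : Fin m → Fin 4, sgn a x = 2 ^ m := by
  have h : ∀ u : Fin 4, ∑ v : Fin 4, (if u = v then (-1:ℤ) else 1) = 2 := by decide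
  simp only [sgn]
  rw [sum_pi (fun i v => if a i = v then (-1:ℤ) else 1)]
  simp [h]

private lemma sum_sgn_two {m : ℕ} {a b : Fin m → Fin 4} (hab : a ≠ b) :
    ∑ x : Fin m → Fin 4, sgn a x * sgn b x = 0 := by
  have h : ∀ u w : Fin 4, u ≠ w →
      ∑ v : Fin 4, (if u = v then (-1:ℤ) else 1) * (if w = v then (-1:ℤ) else 1) = 0 := by
    decide
  simp only [sgn, ← Finset.prod_mul_distrib]
  rw [sum_pi (fun i v => (if a i = v then (-1:ℤ) else 1) * (if b i = v then (-1:ℤ) else 1))]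
  obtain ⟨i, hi⟩ := Function.ne_iff.mp hab
  exact Finset.prod_eq_zero (Finset.mem_univ i) (h _ _ hi)

private lemma sum_sgn_three {m : ℕ} (a b c : Fin m → Fin 4) :
    ∑ x : Fin m → Fin 4, sgn a x * sgn b x * sgn c x
      = 2 ^ m * (-1 : ℤ) ^ (Dcnt a b c) := by
  have h : ∀ u v w : Fin 4,
      (∑ x : Fin 4, (if u = x then (-1:ℤ) else 1) * (if v = x then (-1:ℤ) else 1)
        * (if w = x then (-1:ℤ) else 1))
      = if u ≠ v ∧ u ≠ w ∧ v ≠ w then -2 else 2 := by decide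
  simp only [sgn, ← Finset.prod_mul_distrib]
  rw [sum_pi (fun i v => (if a i = v then (-1:ℤ) else 1) * (if b i = v then (-1:ℤ) else 1)
    * (if c i = v then (-1:ℤ) else 1))]
  have : ∀ i : Fin m,
      (∑ v : Fin 4, (if a i = v then (-1:ℤ) else 1) * (if b i = v then (-1:ℤ) else 1)
        * (if c i = v then (-1:ℤ) else 1))
      = 2 * (if a i ≠ b i ∧ a i ≠ c i ∧ b i ≠ c i then -1 else 1) := by
    intro i
    rw [h]
    split <;> ring
  rw [Finset.prod_congr rfl fun i _ => this i, Finset.prod_mul_distrib]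
  congr 1
  · simp
  · rw [Dcnt, ← Finset.prod_filter]
    simp [Finset.prod_const]

private lemma mem_block {m : ℕ} (a x : Fin m → Fin 4) :
    x ∈ symplecticBlock m a ↔ Odd (Finset.univ.filter fun i => a i = x i).card := by
  simp [symplecticBlock]

private lemma one_sub_sgn {m : ℕ} (a x : Fin m → Fin 4) :
    1 - sgn a x = if x ∈ symplecticBlock m a then 2 else 0 := by
  rw [sgn_eq_pow]
  simp only [mem_block]
  by_cases h : Odd (Finset.univ.filter fun i => a i = x i).card
  · rw [if_pos h, h.neg_one_pow]; ring
  · rw [if_neg h, (Nat.not_odd_iff_even.mp h).neg_one_pow]; ring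

private lemma card_triple {m : ℕ} {a b c : Fin m → Fin 4}
    (hab : a ≠ b) (hac : a ≠ c) (hbc : b ≠ c) :
    (8 : ℤ) * ((symplecticBlock m a ∩ symplecticBlock m b ∩ symplecticBlock m c).card : ℤ)
      = 4 ^ m - 3 * 2 ^ m - (-1 : ℤ) ^ (Dcnt a b c) * 2 ^ m := by
  have key : ∑ x : Fin m → Fin 4, (1 - sgn a x) * (1 - sgn b x) * (1 - sgn c x)
      = (8 : ℤ) * ((symplecticBlock m a ∩ symplecticBlock m b ∩ symplecticBlock m c).card : ℤ) := by
    have : ∀ x : Fin m → Fin 4, (1 - sgn a x) * (1 - sgn b x) * (1 - sgn c x)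
        = if x ∈ symplecticBlock m a ∩ symplecticBlock m b ∩ symplecticBlock m c then 8 else 0 := by
      intro x
      rw [one_sub_sgn, one_sub_sgn, one_sub_sgn]
      by_cases h1 : x ∈ symplecticBlock m a <;> by_cases h2 : x ∈ symplecticBlock m b <;>
        by_cases h3 : x ∈ symplecticBlock m c <;>
        simp [h1, h2, h3]
    rw [Finset.sum_congr rfl fun x _ => this x, Finset.sum_ite_mem, Finset.univ_inter,
      Finset.sum_const]
    ring
  rw [← key]
  have expand : ∀ x : Fin m → Fin 4, (1 - sgn a x) * (1 - sgn b x) * (1 - sgn c x)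
      = 1 - sgn a x - sgn b x - sgn c x + sgn a x * sgn b x + sgn a x * sgn c x
        + sgn b x * sgn c x - sgn a x * sgn b x * sgn c x := by intro x; ring
  rw [Finset.sum_congr rfl fun x _ => expand x]
  simp only [Finset.sum_add_distrib, Finset.sum_sub_distrib, Finset.sum_const,
    Finset.card_univ, nsmul_eq_mul, mul_one]
  rw [sum_sgn_one, sum_sgn_one, sum_sgn_one, sum_sgn_two hab, sum_sgn_two hac, sum_sgn_two hbc,
    sum_sgn_three]
  have : (Fintype.card (Fin m → Fin 4) : ℤ) = 4 ^ m := by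
    simp [Fintype.card_fun]
  rw [this]
  ring

private lemma card_iff_even {m : ℕ} (hm : 2 ≤ m) {a b c : Fin m → Fin 4}
    (hab : a ≠ b) (hac : a ≠ c) (hbc : b ≠ c) :
    ((symplecticBlock m a ∩ symplecticBlock m b ∩ symplecticBlock m c).card
      = 2 ^ (2 * m - 3) - 2 ^ (m - 1)) ↔ Even (Dcnt a b c) := by
  have h := card_triple hab hac hbc
  have h1 : (2:ℕ) ^ (m - 1) ≤ 2 ^ (2 * m - 3) := Nat.pow_le_pow_right (by norm_num) (by omega)
  have h2 : (2:ℕ) ^ (m - 2) < 2 ^ (m - 1) := Nat.pow_lt_pow_right (by norm_num) (by omega)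
  have e4 : (4 : ℤ) ^ m = 8 * 2 ^ (2 * m - 3) := by
    have h4 : (4:ℤ)^m = 2 ^ (2*m) := by rw [show (4:ℤ) = 2^2 by norm_num, ← pow_mul]
    rw [h4]
    conv_lhs => rw [show 2*m = 3 + (2*m-3) by omega]
    rw [pow_add]; norm_num
  have e2 : (2 : ℤ) ^ m = 2 * 2 ^ (m - 1) := by
    conv_lhs => rw [show m = 1 + (m-1) by omega]
    rw [pow_add]; ring
  constructor
  · intro hcard
    by_contra hodd
    rw [Nat.not_even_iff_odd] at hodd
    rw [hcard, hodd.neg_one_pow] at h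
    push_cast [Nat.cast_sub h1] at h
    rw [e4, e2] at h
    nlinarith [pow_pos (show (0:ℤ) < 2 by norm_num) (m-1)]
  · intro heven
    rw [heven.neg_one_pow] at h
    have : (8 : ℤ) * ((symplecticBlock m a ∩ symplecticBlock m b ∩ symplecticBlock m c).card : ℤ)
        = 8 * ((2 ^ (2 * m - 3) - 2 ^ (m - 1) : ℕ) : ℤ) := by
      rw [h]
      push_cast [Nat.cast_sub h1]
      rw [e4, e2]
      ring
    have := mul_left_cancel₀ (show (8:ℤ) ≠ 0 by norm_num) this
    exact_mod_cast this

private lemma even_dcnt_sum {m : ℕ} (a b c d : Fin m → Fin 4) :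
    Even (Dcnt a b c + Dcnt a b d + Dcnt a c d + Dcnt b c d) := by
  have key : ∀ u v w z : Fin 4, Even ((if u≠v∧u≠w∧v≠w then 1 else 0)
      + (if u≠v∧u≠z∧v≠z then 1 else 0) + (if u≠w∧u≠z∧w≠z then 1 else 0)
      + (if v≠w∧v≠z∧w≠z then 1 else 0)) := by decide
  simp only [Dcnt, Finset.card_filter, ← Finset.sum_add_distrib]
  apply Finset.sum_induction _ Even (fun x y => Even.add) Even.zero
  intro i _
  exact key (a i) (b i) (c i) (d i)

theorem symplectic_condition2 {m : ℕ} (hm : 2 ≤ m) :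
    ∀ a b c d : Fin m → Fin 4, a ≠ b → a ≠ c → a ≠ d → b ≠ c → b ≠ d → c ≠ d →
      Even ((if (symplecticBlock m a ∩ symplecticBlock m b ∩ symplecticBlock m c).card
                = 2^(2*m-3) - 2^(m-1) then 1 else 0) +
            (if (symplecticBlock m a ∩ symplecticBlock m b ∩ symplecticBlock m d).card
                = 2^(2*m-3) - 2^(m-1) then 1 else 0) +
            (if (symplecticBlock m a ∩ symplecticBlock m c ∩ symplecticBlock m d).card
                = 2^(2*m-3) - 2^(m-1) then 1 else 0) +
            (if (symplecticBlock m b ∩ symplecticBlock m c ∩ symplecticBlock m d).card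
                = 2^(2*m-3) - 2^(m-1) then 1 else 0)) := by
  intro a b c d hab hac had hbc hbd hcd
  rw [Nat.even_iff]
  simp only [if_congr (card_iff_even hm hab hac hbc) rfl rfl,
    if_congr (card_iff_even hm hab had hbd) rfl rfl,
    if_congr (card_iff_even hm hac had hcd) rfl rfl,
    if_congr (card_iff_even hm hbc hbd hcd) rfl rfl]
  have h := even_dcnt_sum a b c d
  rw [Nat.even_iff] at h
  simp only [Nat.even_iff]
  split_ifs <;> omega
end
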